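/- The (4,2)-hypercontractivity theorem: for every f : {-1,1}ⁿ → ℝ, ‖T_{1/√3} f‖₄ ≤ ‖f‖₂. -/

import Mathlib

open Finset Function

noncomputable section

/-- Expectation with respect to the uniform measure on the Hamming cube,
encoded as `Fin n → Bool` (`true ↦ 1`, `false ↦ -1`). -/
def expec {n : ℕ} (f : (Fin n → Bool) → ℝ) : ℝ :=
  (∑ x : Fin n → Bool, f x) / 2 ^ n

/-- The character χ_S. -/
def chi {n : ℕ} (S : Finset (Fin n)) (x : Fin n → Bool) : ℝ :=
  ∏ i ∈ S, (if x i then (1 : ℝ) else -1)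

/-- Fourier coefficient f̂(S) = E[f χ_S]. -/
def fcoef {n : ℕ} (f : (Fin n → Bool) → ℝ) (S : Finset (Fin n)) : ℝ :=
  expec (fun x => f x * chi S x)

/-- Influence of coordinate i: probability that flipping coordinate i changes f. -/
def infl {n : ℕ} (f : (Fin n → Bool) → ℝ) (i : Fin n) : ℝ :=
  expec (fun x => if f x ≠ f (Function.update x i (!(x i))) then (1 : ℝ) else 0)

/-- Total influence. -/
def totalInfl {n : ℕ} (f : (Fin n → Bool) → ℝ) : ℝ :=
  ∑ i : Fin n, infl f i

/-- The p-norm ‖f‖_p = (E[|f|^p])^{1/p}. -/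
def pnorm {n : ℕ} (p : ℝ) (f : (Fin n → Bool) → ℝ) : ℝ :=
  (expec (fun x => |f x| ^ p)) ^ (1 / p)

/-- The discrete i-th derivative. -/
def deriv' {n : ℕ} (i : Fin n) (g : (Fin n → Bool) → ℝ) : (Fin n → Bool) → ℝ :=
  fun x => (g (Function.update x i true) - g (Function.update x i false)) / 2

/-- The noise operator T_ρ. -/
def noiseOp {n : ℕ} (ρ : ℝ) (f : (Fin n → Bool) → ℝ) : (Fin n → Bool) → ℝ :=
  fun x => ∑ S : Finset (Fin n), ρ ^ S.card * fcoef f S * chi S x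

end


/-! Bonami's induction on the dimension, for any `ρ` with `ρ² ≤ 1/3`. Splitting off the first
coordinate, `f(x₀, y) = g(y) + x₀ h(y)` and correspondingly `T_ρ f(x₀, y) = T_ρ g(y) + ρ x₀ T_ρ h(y)`.
Averaging over `x₀` kills the odd powers of `x₀`, so
`E[(T_ρ f)⁴] = E[(T_ρ g)⁴] + 6ρ² E[(T_ρ g)² (T_ρ h)²] + ρ⁴ E[(T_ρ h)⁴]`.
By induction and Cauchy–Schwarz this is at most
`‖g‖₂⁴ + 6ρ² ‖g‖₂² ‖h‖₂² + ρ⁴ ‖h‖₂⁴ ≤ (‖g‖₂² + ‖h‖₂²)² = ‖f‖₂⁴`. -/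

theorem Finset.powerset_map {α β : Type*} (e : α ↪ β) (s : Finset α) :
    (s.map e).powerset = s.powerset.map (mapEmbedding e).toEmbedding := by
  ext t
  simp only [mem_powerset, subset_map_iff, mem_map, RelEmbedding.coe_toEmbedding,
    mapEmbedding_apply]
  exact exists_congr fun u => by rw [eq_comm]

noncomputable section

namespace Hypercontractivity

def sgn (b : Bool) : ℝ := if b then 1 else -1

variable {n : ℕ}

lemma sum_fin_succ_pi (F : (Fin (n + 1) → Bool) → ℝ) :
    ∑ x, F x = ∑ y : Fin n → Bool, (F (Fin.cons true y) + F (Fin.cons false y)) := by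
  rw [← (Fin.consEquiv fun _ => Bool).sum_comp, Fintype.sum_prod_type_right]
  simp [Fin.consEquiv, add_comm]

lemma sum_finset_fin_succ (G : Finset (Fin (n + 1)) → ℝ) :
    ∑ S, G S = ∑ T : Finset (Fin n),
      (G (T.map (Fin.succEmb n)) + G (insert 0 (T.map (Fin.succEmb n)))) := by
  have h0 : (0 : Fin (n + 1)) ∉ univ.map (Fin.succEmb n) := by simp [Fin.succ_ne_zero]
  have hu : (univ : Finset (Fin (n + 1))) = insert 0 (univ.map (Fin.succEmb n)) := by
    rw [Fin.univ_succ, cons_eq_insert]; rfl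
  rw [← powerset_univ, hu, sum_powerset_insert h0, powerset_map,
    sum_map, sum_map, powerset_univ, ← sum_add_distrib]
  rfl

-- `E₀ f` and `D₀ f` as functions of the remaining coordinates: `f (b, y) = firstAvg f y ± firstDeriv f y`.
def firstAvg (f : (Fin (n + 1) → Bool) → ℝ) (y : Fin n → Bool) : ℝ :=
  (f (Fin.cons true y) + f (Fin.cons false y)) / 2

def firstDeriv (f : (Fin (n + 1) → Bool) → ℝ) (y : Fin n → Bool) : ℝ :=
  (f (Fin.cons true y) - f (Fin.cons false y)) / 2

lemma expec_firstAvg (f : (Fin (n + 1) → Bool) → ℝ) : expec (firstAvg f) = expec f := by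
  simp only [expec, firstAvg, sum_fin_succ_pi, ← sum_div, pow_succ]
  field_simp

lemma expec_add (F G : (Fin n → Bool) → ℝ) :
    expec (fun x => F x + G x) = expec F + expec G := by
  simp only [expec, sum_add_distrib, add_div]

lemma expec_const_mul (c : ℝ) (F : (Fin n → Bool) → ℝ) :
    expec (fun x => c * F x) = c * expec F := by
  simp only [expec, ← mul_sum, mul_div_assoc]

lemma expec_nonneg {F : (Fin n → Bool) → ℝ} (hF : ∀ x, 0 ≤ F x) : 0 ≤ expec F :=
  div_nonneg (sum_nonneg fun x _ => hF x) (by positivity)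

lemma expec_mul_sq_le (F G : (Fin n → Bool) → ℝ) :
    expec (fun x => F x * G x) ^ 2 ≤ expec (fun x => F x ^ 2) * expec (fun x => G x ^ 2) := by
  simp only [expec, div_pow, div_mul_div_comm, ← sq]
  gcongr
  exact sum_mul_sq_le_sq_mul_sq _ _ _

lemma chi_map_succ (T : Finset (Fin n)) (b : Bool) (y : Fin n → Bool) :
    chi (T.map (Fin.succEmb n)) (Fin.cons b y) = chi T y := by
  simp [chi]

lemma chi_insert_zero_map_succ (T : Finset (Fin n)) (b : Bool) (y : Fin n → Bool) :
    chi (insert 0 (T.map (Fin.succEmb n))) (Fin.cons b y) = sgn b * chi T y := by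
  rw [chi, prod_insert (by simp [Fin.succ_ne_zero]), ← chi, chi_map_succ]
  rfl

lemma fcoef_map_succ (f : (Fin (n + 1) → Bool) → ℝ) (T : Finset (Fin n)) :
    fcoef f (T.map (Fin.succEmb n)) = fcoef (firstAvg f) T := by
  rw [fcoef, ← expec_firstAvg, fcoef]
  congr 1
  ext y
  simp only [firstAvg, chi_map_succ]
  ring

lemma fcoef_insert_zero_map_succ (f : (Fin (n + 1) → Bool) → ℝ) (T : Finset (Fin n)) :
    fcoef f (insert 0 (T.map (Fin.succEmb n))) = fcoef (firstDeriv f) T := by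
  rw [fcoef, ← expec_firstAvg, fcoef]
  congr 1
  ext y
  simp only [firstAvg, firstDeriv, chi_insert_zero_map_succ, sgn]
  norm_num
  ring

lemma noiseOp_cons (ρ : ℝ) (f : (Fin (n + 1) → Bool) → ℝ) (b : Bool) (y : Fin n → Bool) :
    noiseOp ρ f (Fin.cons b y)
      = noiseOp ρ (firstAvg f) y + ρ * sgn b * noiseOp ρ (firstDeriv f) y := by
  simp only [noiseOp, sum_finset_fin_succ, card_map, chi_map_succ, chi_insert_zero_map_succ,
    fcoef_map_succ, fcoef_insert_zero_map_succ, sum_add_distrib, mul_sum]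
  congr 1
  refine sum_congr rfl fun T _ => ?_
  rw [card_insert_of_notMem (by simp [Fin.succ_ne_zero]), card_map]
  ring

lemma expec_sq_eq_firstAvg_add_firstDeriv (f : (Fin (n + 1) → Bool) → ℝ) :
    expec (fun x => f x ^ 2)
      = expec (fun y => firstAvg f y ^ 2) + expec (fun y => firstDeriv f y ^ 2) := by
  rw [← expec_firstAvg, ← expec_add]
  congr 1
  ext y
  simp only [firstAvg, firstDeriv]
  ring

lemma expec_noiseOp_pow_four_eq (ρ : ℝ) (f : (Fin (n + 1) → Bool) → ℝ) :
    expec (fun x => noiseOp ρ f x ^ 4)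
      = expec (fun y => noiseOp ρ (firstAvg f) y ^ 4)
        + 6 * ρ ^ 2 * expec (fun y => noiseOp ρ (firstAvg f) y ^ 2 * noiseOp ρ (firstDeriv f) y ^ 2)
        + ρ ^ 4 * expec (fun y => noiseOp ρ (firstDeriv f) y ^ 4) := by
  rw [← expec_firstAvg, ← expec_const_mul, ← expec_const_mul, ← expec_add, ← expec_add]
  congr 1
  ext y
  simp only [firstAvg, noiseOp_cons, sgn]
  norm_num
  ring

lemma expec_sq_mul_sq_le {F G : (Fin n → Bool) → ℝ} {a b : ℝ} (ha : 0 ≤ a) (hb : 0 ≤ b)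
    (hF : expec (fun x => F x ^ 4) ≤ a ^ 2) (hG : expec (fun x => G x ^ 4) ≤ b ^ 2) :
    expec (fun x => F x ^ 2 * G x ^ 2) ≤ a * b := by
  have hFG : expec (fun x => F x ^ 2 * G x ^ 2) ^ 2
      ≤ expec (fun x => F x ^ 4) * expec (fun x => G x ^ 4) := by
    convert expec_mul_sq_le (fun x => F x ^ 2) (fun x => G x ^ 2) using 3 <;> ext x <;> ring
  refine (sq_le_sq₀ (expec_nonneg fun x => by positivity) (mul_nonneg ha hb)).mp ?_
  calc _ ≤ _ := hFG
    _ ≤ a ^ 2 * b ^ 2 := mul_le_mul hF hG (expec_nonneg fun x => by positivity) (sq_nonneg a)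
    _ = (a * b) ^ 2 := (mul_pow a b 2).symm

theorem expec_noiseOp_pow_four_le {ρ : ℝ} (hρ : ρ ^ 2 ≤ 1 / 3) (f : (Fin n → Bool) → ℝ) :
    expec (fun x => noiseOp ρ f x ^ 4) ≤ expec (fun x => f x ^ 2) ^ 2 := by
  induction n with
  | zero =>
    simp only [expec, univ_unique, noiseOp, eq_empty_of_isEmpty, card_empty, pow_zero, fcoef, chi,
      prod_empty, mul_one, sum_singleton, div_one, one_mul, sum_const, card_singleton, one_smul]
    exact le_of_eq (by ring)
  | succ n ih =>
    set B := noiseOp ρ (firstDeriv f)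
    have ha : 0 ≤ expec (fun y => firstAvg f y ^ 2) := expec_nonneg fun y => sq_nonneg _
    have hb : 0 ≤ expec (fun y => firstDeriv f y ^ 2) := expec_nonneg fun y => sq_nonneg _
    have hB4 : 0 ≤ expec (fun y => B y ^ 4) := expec_nonneg fun y => by positivity
    have hAB := expec_sq_mul_sq_le ha hb (ih (firstAvg f)) (ih (firstDeriv f))
    have hρ4 : ρ ^ 4 ≤ 1 := by nlinarith [sq_nonneg ρ]
    rw [expec_noiseOp_pow_four_eq, expec_sq_eq_firstAvg_add_firstDeriv]
    nlinarith [ih (firstAvg f), ih (firstDeriv f), mul_le_mul_of_nonneg_left hAB (sq_nonneg ρ),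
      mul_le_mul_of_nonneg_right hρ4 hB4, mul_nonneg ha hb]

lemma pnorm_of_even {k : ℕ} (hk : Even k) (f : (Fin n → Bool) → ℝ) :
    pnorm k f = expec (fun x => f x ^ k) ^ (1 / (k : ℝ)) := by
  simp only [pnorm, Real.rpow_natCast, hk.pow_abs]

end Hypercontractivity

open Hypercontractivity

/-- The (4,2)-hypercontractivity theorem. -/
theorem hypercontractivity_42 {n : ℕ} (f : (Fin n → Bool) → ℝ) :
    pnorm 4 (noiseOp (1 / Real.sqrt 3) f) ≤ pnorm 2 f := by
  have hρ : (1 / Real.sqrt 3) ^ 2 ≤ 1 / 3 := by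
    rw [div_pow, Real.sq_sqrt (by norm_num)]; norm_num
  have h4 := pnorm_of_even (k := 4) (by decide) (noiseOp (1 / Real.sqrt 3) f)
  have h2 := pnorm_of_even (k := 2) (by decide) f
  simp only [Nat.cast_ofNat] at h4 h2
  rw [h4, h2]
  calc _ ≤ (expec (fun x => f x ^ 2) ^ 2) ^ (1 / 4 : ℝ) :=
        Real.rpow_le_rpow (expec_nonneg fun x => by positivity)
          (expec_noiseOp_pow_four_le hρ f) (by norm_num)
    _ = _ := by
        rw [← Real.rpow_natCast, ← Real.rpow_mul (expec_nonneg fun x => sq_nonneg (f x))]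
        norm_num
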